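/- Let 1 ≤ k ≤ n and λ ∈ Γ_k. Then σ_{k−1}(λ) ≥ (k/(n−k+1)) · (binom(n,k))^{1/k} · (σ_k(λ))^{(k−1)/k}, where binom(n,k) is the binomial coefficient. -/

import Mathlib

open Finset Real

/-- The `k`-th elementary symmetric polynomial of `x ∈ ℝⁿ`. -/
noncomputable def esymmR (n k : ℕ) (x : Fin n → ℝ) : ℝ :=
  ∑ s ∈ Finset.univ.powersetCard k, ∏ i ∈ s, x i

/-- The Gårding cone `Γ_k ⊆ ℝⁿ`. -/
def GardingCone (n k : ℕ) : Set (Fin n → ℝ) :=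
  {x | ∀ j : ℕ, 1 ≤ j → j ≤ k → 0 < esymmR n j x}

/-!
With the normalized means `E i = σ_i / C(n, i)` and `k / (n - k + 1) * C(n, k) = C(n, k - 1)`,
the inequality becomes Maclaurin's `E k ^ ((k - 1) / k) ≤ E (k - 1)`. Maclaurin's inequality
follows by induction from Newton's inequalities `E j * E (j + 2) ≤ E (j + 1) ^ 2`, using that
`E 1, …, E k` are positive on `Γ_k`. Newton's inequalities hold for every real tuple: replacing
the roots of `∏ (X - λ i)` by those of its derivative (all real, by Rolle) keeps the means and
shortens the tuple, so one may assume `n = j + 2`; inverting the entries then exchanges `E i` with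
`E (n - i)`, which reduces the claim to `E 2 ≤ E 1 ^ 2`, i.e. to Cauchy–Schwarz.
-/

namespace Multiset

section CommSemiring

variable {R : Type*} [CommSemiring R]

theorem esymm_zero (s : Multiset R) : s.esymm 0 = 1 := by
  simp [esymm]

theorem esymm_eq_zero_of_card_lt {s : Multiset R} {k : ℕ} (h : card s < k) : s.esymm k = 0 := by
  simp [esymm, powersetCard_eq_empty _ h]

theorem esymm_card (s : Multiset R) : s.esymm (card s) = s.prod := by
  simp [esymm, powersetCard_self]

theorem esymm_one (s : Multiset R) : s.esymm 1 = s.sum := by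
  simp [esymm, powersetCard_one]

theorem esymm_cons_succ (a : R) (s : Multiset R) (k : ℕ) :
    (a ::ₘ s).esymm (k + 1) = s.esymm (k + 1) + a * s.esymm k := by
  simp [esymm, powersetCard_cons, sum_map_mul_left]

theorem sq_sum_eq_sum_sq_add_two_mul_esymm_two (s : Multiset R) :
    s.sum ^ 2 = (s.map (· ^ 2)).sum + 2 * s.esymm 2 := by
  induction s using Multiset.induction with
  | empty => simp [esymm_eq_zero_of_card_lt (s := (0 : Multiset R)) (k := 2) (by simp)]
  | cons a s ih => rw [sum_cons, map_cons, sum_cons, esymm_cons_succ, esymm_one, add_sq, ih]; ring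

end CommSemiring

theorem sq_sum_le_card_mul_sum_sq {α : Type*} [Semiring α] [LinearOrder α]
    [IsStrictOrderedRing α] [ExistsAddOfLE α] (s : Multiset α) :
    s.sum ^ 2 ≤ card s * (s.map (· ^ 2)).sum := by
  have h := _root_.sq_sum_le_card_mul_sum_sq (s := s.toEnumFinset) (f := Prod.fst)
  rw [card_toEnumFinset] at h
  convert h using 3
  · rw [Finset.sum, map_toEnumFinset_fst]
  · conv_lhs => rw [← map_toEnumFinset_fst s, map_map]
    rfl

section Field

variable {K : Type*} [Field K]

noncomputable def esymmMean (s : Multiset K) (k : ℕ) : K :=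
  s.esymm k / (card s).choose k

@[simp]
theorem esymmMean_zero (s : Multiset K) : s.esymmMean 0 = 1 := by
  simp [esymmMean, esymm_zero]

theorem esymmMean_card (s : Multiset K) : s.esymmMean (card s) = s.prod := by
  simp [esymmMean, esymm_card]

theorem esymmMean_eq_zero_of_card_lt {s : Multiset K} {k : ℕ} (h : card s < k) :
    s.esymmMean k = 0 := by
  rw [esymmMean, esymm_eq_zero_of_card_lt h, zero_div]

theorem esymm_map_inv_mul_prod {s : Multiset K} (hs : ∀ a ∈ s, a ≠ 0) {i j : ℕ}
    (hij : i + j = card s) : (s.map (·⁻¹)).esymm i * s.prod = s.esymm j := by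
  induction s using Multiset.induction generalizing i j with
  | empty =>
    obtain ⟨rfl, rfl⟩ : i = 0 ∧ j = 0 := by simpa using hij
    simp [esymm_zero]
  | cons a s ih =>
    have ha : a ≠ 0 := hs a (mem_cons_self a s)
    have hs' : ∀ b ∈ s, b ≠ 0 := fun b hb ↦ hs b (mem_cons_of_mem hb)
    rcases i with _ | i
    · rw [zero_add] at hij
      rw [hij, esymm_card, esymm_zero, one_mul, prod_cons]
    rw [card_cons] at hij
    rw [map_cons, esymm_cons_succ, prod_cons, add_mul,
      show a⁻¹ * (s.map (·⁻¹)).esymm i * (a * s.prod) = (s.map (·⁻¹)).esymm i * s.prod by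
        field_simp,
      ih hs' (i := i) (j := j) (by omega)]
    rcases j with _ | j
    · rw [esymm_eq_zero_of_card_lt (by simp; omega)]
      simp [esymm_zero]
    · rw [esymm_cons_succ, mul_left_comm, ih hs' (i := i + 1) (j := j) (by omega)]
      ring

theorem esymmMean_map_inv_mul_prod {s : Multiset K} (hs : ∀ a ∈ s, a ≠ 0) {i j : ℕ}
    (hij : i + j = card s) : (s.map (·⁻¹)).esymmMean i * s.prod = s.esymmMean j := by
  rw [esymmMean, esymmMean, card_map, div_mul_eq_mul_div, esymm_map_inv_mul_prod hs hij,
    Nat.choose_symm_of_eq_add hij.symm]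

end Field

section LinearOrderedField

variable {K : Type*} [Field K] [LinearOrder K] [IsStrictOrderedRing K]

theorem esymmMean_two_le_sq (s : Multiset K) : s.esymmMean 2 ≤ s.esymmMean 1 ^ 2 := by
  rcases lt_or_ge (card s) 2 with hs | hs
  · simp only [esymmMean, Nat.choose_eq_zero_of_lt hs, Nat.cast_zero, div_zero]
    positivity
  have hsq := sq_sum_eq_sum_sq_add_two_mul_esymm_two s
  have hcs := sq_sum_le_card_mul_sum_sq s
  have hm : (2 : K) ≤ card s := by exact_mod_cast hs
  rw [esymmMean, esymmMean, Nat.cast_choose_two, esymm_one, Nat.choose_one_right, div_pow,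
    div_le_div_iff₀ (by nlinarith) (by positivity)]
  nlinarith [sq_nonneg s.sum]

end LinearOrderedField

section Derivative

open Polynomial

theorem esymmMean_eq_of_derivative_prod_X_sub_C_eq {K : Type*} [Field K] [CharZero K]
    {s t : Multiset K} {m : ℕ} (hs : card s = m + 1) (ht : card t = m)
    (h : derivative (s.map (X - C ·)).prod = C ((m : K) + 1) * (t.map (X - C ·)).prod)
    {j : ℕ} (hj : j ≤ m) : t.esymmMean j = s.esymmMean j := by
  obtain ⟨i, rfl⟩ : ∃ i, m = i + j := ⟨m - j, by omega⟩
  set c : K := ((i : K) + 1) / ((i + j : ℕ) + 1) with hc_def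
  have hm : ((i + j : ℕ) : K) + 1 ≠ 0 := Nat.cast_add_one_ne_zero _
  have hc : c ≠ 0 := div_ne_zero (Nat.cast_add_one_ne_zero i) hm
  have hesymm : t.esymm j = c * s.esymm j := by
    have hcoeff := congrArg (coeff · i) h
    simp only [coeff_derivative, coeff_C_mul] at hcoeff
    rw [prod_X_sub_C_coeff s (by omega), prod_X_sub_C_coeff t (by omega), hs, ht,
      show i + j + 1 - (i + 1) = j by omega, show i + j - i = j by omega] at hcoeff
    have hsign : (-1 : K) ^ j ≠ 0 := pow_ne_zero j (neg_ne_zero.mpr one_ne_zero)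
    have hscaled : ((i + j : ℕ) + 1 : K) * t.esymm j = (i + 1) * s.esymm j :=
      mul_left_cancel₀ hsign (by linear_combination -hcoeff)
    rw [hc_def]
    field_simp
    linear_combination hscaled
  have hchoose : ((i + j).choose j : K) = c * (i + j + 1).choose j := by
    have := Nat.choose_mul_succ_eq (i + j) j
    rw [show i + j + 1 - j = i + 1 by omega] at this
    rw [hc_def]
    field_simp
    exact_mod_cast this.trans (Nat.mul_comm _ _)
  rw [esymmMean, esymmMean, hs, ht, hesymm, hchoose, mul_div_mul_left _ _ hc]

theorem exists_derivative_prod_X_sub_C_eq (s : Multiset ℝ) {m : ℕ} (hs : card s = m + 1) :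
    ∃ t : Multiset ℝ, card t = m ∧
      derivative (s.map (X - C ·)).prod = C ((m : ℝ) + 1) * (t.map (X - C ·)).prod := by
  set p := (s.map (X - C ·)).prod
  have hdeg : p.natDegree = m + 1 := by rw [natDegree_multiset_prod_X_sub_C_eq_card, hs]
  have hroots : card (derivative p).roots = m := by
    refine le_antisymm ?_ ?_
    · simpa [hdeg] using card_roots' (derivative p)
    · have := card_roots_le_derivative p
      rw [roots_multiset_prod_X_sub_C, hs] at this
      omega
  refine ⟨(derivative p).roots, hroots, ?_⟩
  have hmonic : p.Monic := monic_multiset_prod_of_monic s (X - C ·) fun a _ ↦ monic_X_sub_C a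
  have hlead : (derivative p).leadingCoeff = (m : ℝ) + 1 := by
    simp [hdeg, hmonic.leadingCoeff]
  rw [← hlead, C_leadingCoeff_mul_prod_multiset_X_sub_C (by simp [hroots, hdeg])]

theorem exists_esymmMean_eq (s : Multiset ℝ) {m : ℕ} (hs : card s = m + 1) :
    ∃ t : Multiset ℝ, card t = m ∧ ∀ j ≤ m, t.esymmMean j = s.esymmMean j := by
  obtain ⟨t, ht, h⟩ := exists_derivative_prod_X_sub_C_eq s hs
  exact ⟨t, ht, fun j hj ↦ esymmMean_eq_of_derivative_prod_X_sub_C_eq hs ht h hj⟩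

end Derivative

theorem esymmMean_mul_esymmMean_le_sq_of_card_eq {s : Multiset ℝ} {j : ℕ}
    (hs : card s = j + 2) :
    s.esymmMean j * s.esymmMean (j + 2) ≤ s.esymmMean (j + 1) ^ 2 := by
  by_cases h0 : ∀ a ∈ s, a ≠ 0
  · set u := s.map (·⁻¹)
    have hu (i k : ℕ) (h : i + k = j + 2) : u.esymmMean i * s.prod = s.esymmMean k :=
      esymmMean_map_inv_mul_prod h0 (h.trans hs.symm)
    rw [← hu 2 j (by omega), ← hu 1 (j + 1) (by omega), ← hu 0 (j + 2) (zero_add _),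
      esymmMean_zero]
    calc u.esymmMean 2 * s.prod * (1 * s.prod) = u.esymmMean 2 * s.prod ^ 2 := by ring
      _ ≤ u.esymmMean 1 ^ 2 * s.prod ^ 2 := by gcongr; exact esymmMean_two_le_sq u
      _ = (u.esymmMean 1 * s.prod) ^ 2 := by ring
  · push Not at h0
    obtain ⟨a, ha, rfl⟩ := h0
    rw [← hs, esymmMean_card, prod_eq_zero ha, mul_zero]
    positivity

theorem esymmMean_mul_esymmMean_le_sq (s : Multiset ℝ) (j : ℕ) :
    s.esymmMean j * s.esymmMean (j + 2) ≤ s.esymmMean (j + 1) ^ 2 := by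
  rcases lt_or_ge (card s) (j + 2) with hs | hs
  · rw [esymmMean_eq_zero_of_card_lt hs, mul_zero]
    positivity
  obtain ⟨m, hm⟩ : ∃ m, card s = j + 2 + m := ⟨card s - (j + 2), by omega⟩
  induction m generalizing s with
  | zero => exact esymmMean_mul_esymmMean_le_sq_of_card_eq hm
  | succ m ih =>
    obtain ⟨t, ht, hts⟩ := exists_esymmMean_eq s (m := j + 2 + m) hm
    rw [← hts j (by omega), ← hts (j + 1) (by omega), ← hts (j + 2) (by omega)]
    exact ih t (by omega) ht

theorem esymmMean_succ_pow_le (s : Multiset ℝ) {j : ℕ}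
    (hpos : ∀ i ≤ j + 1, 0 < s.esymmMean i) :
    s.esymmMean (j + 1) ^ j ≤ s.esymmMean j ^ (j + 1) := by
  induction j with
  | zero => simp
  | succ j ih =>
    have h0 := hpos j (by omega)
    have h1 := hpos (j + 1) (by omega)
    have h2 := hpos (j + 2) (by omega)
    have ih := ih fun i hi ↦ hpos i (by omega)
    refine le_of_mul_le_mul_left ?_ (pow_pos h1 j)
    calc s.esymmMean (j + 1) ^ j * s.esymmMean (j + 2) ^ (j + 1)
        ≤ s.esymmMean j ^ (j + 1) * s.esymmMean (j + 2) ^ (j + 1) := by gcongr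
      _ = (s.esymmMean j * s.esymmMean (j + 2)) ^ (j + 1) := (mul_pow ..).symm
      _ ≤ (s.esymmMean (j + 1) ^ 2) ^ (j + 1) := by
        gcongr
        exact esymmMean_mul_esymmMean_le_sq s j
      _ = s.esymmMean (j + 1) ^ j * s.esymmMean (j + 1) ^ (j + 2) := by ring

end Multiset

theorem Real.rpow_natCast_div_le_of_pow_le {a b : ℝ} (ha : 0 ≤ a) (hb : 0 ≤ b) {p q : ℕ}
    (hq : q ≠ 0) (h : a ^ p ≤ b ^ q) : a ^ ((p : ℝ) / q) ≤ b := by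
  rw [div_eq_mul_inv, rpow_natCast_mul ha, ← pow_rpow_inv_natCast hb hq]
  gcongr

theorem Real.rpow_mul_mul_rpow_of_add_eq_one {c e p q : ℝ} (hc : 0 < c) (he : 0 ≤ e)
    (hpq : p + q = 1) : c ^ p * (c * e) ^ q = c * e ^ q := by
  rw [mul_rpow hc.le he, ← mul_assoc, ← rpow_add hc, hpq, rpow_one]

theorem Nat.succ_div_sub_mul_choose_succ {K : Type*} [Field K] [CharZero K] {n j : ℕ}
    (h : j < n) : ((j : K) + 1) / (n - j) * n.choose (j + 1) = n.choose j := by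
  rw [← Nat.cast_sub h.le, div_mul_eq_mul_div, div_eq_iff (Nat.cast_ne_zero.mpr (by omega))]
  exact_mod_cast (Nat.mul_comm _ _).trans (Nat.choose_succ_right_eq n j)

section esymmR

variable {n : ℕ} {x : Fin n → ℝ}

theorem esymmR_eq_choose_mul_esymmMean {i : ℕ} (hi : i ≤ n) :
    esymmR n i x = n.choose i * (univ.val.map x).esymmMean i := by
  rw [Multiset.esymmMean, Multiset.card_map, card_val, card_fin, esymm_map_val,
    mul_div_cancel₀ _ (Nat.cast_ne_zero.mpr (Nat.choose_pos hi).ne')]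
  rfl

theorem esymmMean_pos_of_mem_gardingCone {k : ℕ} (hx : x ∈ GardingCone n k) (hkn : k ≤ n)
    {i : ℕ} (hi : i ≤ k) : 0 < (univ.val.map x).esymmMean i := by
  rcases i with _ | i
  · simp
  · have := hx (i + 1) (by omega) hi
    rw [esymmR_eq_choose_mul_esymmMean (by omega)] at this
    exact pos_of_mul_pos_right this (Nat.cast_nonneg _)

end esymmR

/-- The Maclaurin–Newton type inequality
`σ_{k-1}(λ) ≥ (k/(n-k+1)) (binom(n,k))^{1/k} (σ_k(λ))^{(k-1)/k}` for `λ ∈ Γ_k`. -/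
theorem esymm_pred_ge_rpow (n k : ℕ) (hk : 1 ≤ k) (hkn : k ≤ n)
    (x : Fin n → ℝ) (hx : x ∈ GardingCone n k) :
    ((k : ℝ) / ((n : ℝ) - (k : ℝ) + 1)) * (n.choose k : ℝ) ^ ((1 : ℝ) / k)
        * (esymmR n k x) ^ (((k : ℝ) - 1) / k)
      ≤ esymmR n (k - 1) x := by
  obtain ⟨j, rfl⟩ : ∃ j, k = j + 1 := ⟨k - 1, by omega⟩
  set E := (univ.val.map x).esymmMean
  have hpos (i : ℕ) (hi : i ≤ j + 1) : 0 < E i := esymmMean_pos_of_mem_gardingCone hx hkn hi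
  have hmaclaurin : E (j + 1) ^ ((j : ℝ) / (j + 1)) ≤ E j := by
    exact_mod_cast Real.rpow_natCast_div_le_of_pow_le (hpos _ le_rfl).le (hpos j (by omega)).le
      j.succ_ne_zero (Multiset.esymmMean_succ_pow_le _ hpos)
  have hchoose : (0 : ℝ) < n.choose (j + 1) := by exact_mod_cast Nat.choose_pos hkn
  rw [esymmR_eq_choose_mul_esymmMean hkn, esymmR_eq_choose_mul_esymmMean (by omega),
    Nat.add_sub_cancel]
  push_cast
  rw [add_sub_cancel_right, sub_add_eq_sub_sub, sub_add_cancel, mul_assoc,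
    Real.rpow_mul_mul_rpow_of_add_eq_one hchoose (hpos _ le_rfl).le (by field_simp; ring),
    ← mul_assoc, Nat.succ_div_sub_mul_choose_succ (by omega)]
  gcongr
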